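/- For every integer k ≥ 1, the integrality gap of the undirected cut relaxation on the family of instances consisting of a cycle with 2k vertices is at least 2 − 1/k: on the cycle C_{2k} with unit edge costs where terminal pairs are the k antipodal vertex pairs, the LP optimum of UCR is at most k (setting x_e = 1/2 on all edges), while every integral feasible solution has cost at least 2k − 1. -/
import Mathlib


lemma ucr_exists_flip {n : ℕ} (S : Finset (ZMod n)) :
    ∀ (m : ℕ) (a : ZMod n), a ∈ S → a + (m : ZMod n) ∉ S → ∃ u, u ∈ S ∧ u + 1 ∉ S := by
  intro m
  induction m with
  | zero => intro a ha hb; simp at hb; exact absurd ha hb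
  | succ m ih =>
    intro a ha hb
    by_cases h1 : a + 1 ∈ S
    · refine ih (a + 1) h1 ?_
      have h : a + 1 + (m : ZMod n) = a + ((m + 1 : ℕ) : ZMod n) := by push_cast; ring
      rwa [h]
    · exact ⟨a, ha, h1⟩

lemma ucr_exists_flips {n : ℕ} [NeZero n] (S : Finset (ZMod n)) (a b : ZMod n)
    (ha : a ∈ S) (hb : b ∉ S) :
    (∃ u, u ∈ S ∧ u + 1 ∉ S) ∧ (∃ w, w ∉ S ∧ w + 1 ∈ S) := by
  constructor
  · refine ucr_exists_flip S ((b - a).val) a ha ?_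
    rwa [ZMod.natCast_val, ZMod.cast_id, add_sub_cancel]
  · obtain ⟨u, hu, hu1⟩ := ucr_exists_flip Sᶜ ((a - b).val) b (by simpa using hb)
      (by rw [ZMod.natCast_val, ZMod.cast_id, add_sub_cancel]; simpa using ha)
    exact ⟨u, by simpa using hu, by simpa using hu1⟩

lemma ucr_reach_iff {V : Type*} {G : SimpleGraph V} {P : V → Prop}
    (h : ∀ a b, G.Adj a b → (P a ↔ P b)) {x y : V} (hr : G.Reachable x y) :
    P x ↔ P y := by
  obtain ⟨p⟩ := hr
  induction p with
  | nil => rfl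
  | cons hadj _ ih => exact (h _ _ hadj).trans ih

lemma ucr_exists_pair_index (k : ℕ) [NeZero (2 * k)] (hk : 1 ≤ k) (v : ZMod (2 * k)) :
    ∃ i : Fin k, ((i : ℕ) : ZMod (2 * k)) = v ∨ ((i : ℕ) : ZMod (2 * k)) = v + (k : ZMod (2 * k)) := by
  have hv : v.val < 2 * k := ZMod.val_lt v
  by_cases h : v.val < k
  · exact ⟨⟨v.val, h⟩, Or.inl (by simp [ZMod.natCast_val, ZMod.cast_id])⟩
  · have hcast : ((v.val - k : ℕ) : ZMod (2 * k)) + (k : ZMod (2 * k)) = v := by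
      rw [← Nat.cast_add, Nat.sub_add_cancel (le_of_not_gt h)]
      simp [ZMod.natCast_val, ZMod.cast_id]
    have hkk : (k : ZMod (2 * k)) + (k : ZMod (2 * k)) = 0 := by
      rw [← Nat.cast_add, show k + k = 2 * k by ring, ZMod.natCast_self]
    obtain ⟨m, hmlt, hmv⟩ : ∃ m : ℕ, m < k ∧ ((m : ℕ) : ZMod (2 * k)) + (k : ZMod (2 * k)) = v :=
      ⟨v.val - k, by omega, hcast⟩
    refine ⟨⟨m, hmlt⟩, Or.inr ?_⟩
    show ((m : ℕ) : ZMod (2 * k)) = v + (k : ZMod (2 * k))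
    rw [← hmv, add_assoc, hkk, add_zero]

lemma ucr_sep (k : ℕ) [NeZero (2 * k)] (hk : 1 ≤ k) (u w : ZMod (2 * k)) (huw : u ≠ w) :
    ∃ S : Finset (ZMod (2 * k)),
      (∀ j : ZMod (2 * k), j ≠ u → j ≠ w → (j ∈ S ↔ j + 1 ∈ S)) ∧
      (∃ v : ZMod (2 * k), ¬(v ∈ S ↔ v + (k : ZMod (2 * k)) ∈ S)) := by
  set d := (w - u).val with hd
  have hd1 : 1 ≤ d := by
    have : w - u ≠ 0 := sub_ne_zero.mpr (Ne.symm huw)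
    have := (ZMod.val_eq_zero (w - u)).not.mpr this
    omega
  have hd2 : d < 2 * k := ZMod.val_lt _
  have memS : ∀ v : ZMod (2 * k),
      v ∈ Finset.univ.filter (fun v => 1 ≤ (v - u).val ∧ (v - u).val ≤ d) ↔
      (1 ≤ (v - u).val ∧ (v - u).val ≤ d) := by
    intro v; simp
  have hwu : ((d : ℕ) : ZMod (2 * k)) = w - u := by
    rw [hd, ZMod.natCast_val, ZMod.cast_id]
  refine ⟨Finset.univ.filter (fun v => 1 ≤ (v - u).val ∧ (v - u).val ≤ d), ?_, ?_⟩
  · -- noncrossing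
    intro j hju hjw
    set t := (j - u).val with htdef
    have htu : ((t : ℕ) : ZMod (2 * k)) = j - u := by
      rw [htdef, ZMod.natCast_val, ZMod.cast_id]
    have ht0 : t ≠ 0 := by
      intro h
      exact hju (by have := (ZMod.val_eq_zero (j - u)).mp h; rwa [sub_eq_zero] at this)
    have htd : t ≠ d := by
      intro h
      apply hjw
      have : j - u = w - u := by rw [← htu, ← hwu, h]
      exact sub_left_injective this
    have hsucc : (j + 1 - u).val = (t + 1) % (2 * k) := by
      have h2 : j + 1 - u = ((t + 1 : ℕ) : ZMod (2 * k)) := by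
        push_cast
        rw [htu]; ring
      rw [h2, ZMod.val_natCast]
    rw [memS, memS, hsucc]
    have ht2 : t < 2 * k := ZMod.val_lt _
    rcases Nat.lt_or_ge (t + 1) (2 * k) with h | h
    · rw [Nat.mod_eq_of_lt h]; omega
    · have he : t + 1 = 2 * k := by omega
      rw [he, Nat.mod_self]; omega
  · -- separated pair
    have h1v : (u + 1 - u).val = 1 := by
      have : u + 1 - u = ((1 : ℕ) : ZMod (2 * k)) := by push_cast; ring
      rw [this, ZMod.val_natCast, Nat.mod_eq_of_lt (by omega)]
    have h1kv : (u + 1 + (k : ZMod (2 * k)) - u).val = (1 + k) % (2 * k) := by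
      have : u + 1 + (k : ZMod (2 * k)) - u = ((1 + k : ℕ) : ZMod (2 * k)) := by push_cast; ring
      rw [this, ZMod.val_natCast]
    have hw1v : (w + 1 - u).val = (d + 1) % (2 * k) := by
      have : w + 1 - u = ((d + 1 : ℕ) : ZMod (2 * k)) := by push_cast; rw [hwu]; ring
      rw [this, ZMod.val_natCast]
    have hw1kv : (w + 1 + (k : ZMod (2 * k)) - u).val = (d + 1 + k) % (2 * k) := by
      have : w + 1 + (k : ZMod (2 * k)) - u = ((d + 1 + k : ℕ) : ZMod (2 * k)) := by
        push_cast; rw [hwu]; ring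
      rw [this, ZMod.val_natCast]
    by_cases hc : k + 1 ≤ d ∧ 2 ≤ k
    · refine ⟨w + 1, ?_⟩
      rw [memS, memS, hw1v, hw1kv]
      have hm2 : (d + 1 + k) % (2 * k) = d + 1 + k - 2 * k := by
        rw [Nat.mod_eq_sub_mod (by omega), Nat.mod_eq_of_lt (by omega)]
      rw [hm2]
      rcases Nat.lt_or_ge (d + 1) (2 * k) with h | h
      · rw [Nat.mod_eq_of_lt h]; omega
      · have he : d + 1 = 2 * k := by omega
        rw [he, Nat.mod_self]; omega
    · refine ⟨u + 1, ?_⟩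
      rw [memS, memS, h1v, h1kv]
      rcases Nat.lt_or_ge (1 + k) (2 * k) with h | h
      · rw [Nat.mod_eq_of_lt h]; omega
      · have he : 1 + k = 2 * k := by omega
        rw [he, Nat.mod_self]; omega

/-- Integrality gap of UCR on the cycle C_{2k} with unit costs and antipodal terminal
pairs: the LP admits a feasible solution of value at most k (x = 1/2 on every edge),
while every integral feasible solution has cost at least 2k−1. -/
theorem ucr_integrality_gap_cycle (k : ℕ) [NeZero (2 * k)] (hk : 1 ≤ k)
    (E : Finset (ZMod (2 * k) × ZMod (2 * k)))
    (hE : E = Finset.univ.image (fun i : ZMod (2 * k) => (i, i + 1))) :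
    (∃ x : ZMod (2 * k) × ZMod (2 * k) → ℚ,
      (∀ e, 0 ≤ x e) ∧
      (∀ S : Finset (ZMod (2 * k)),
        (∃ i : Fin k,
          ¬(((i : ℕ) : ZMod (2 * k)) ∈ S ↔ ((i : ℕ) : ZMod (2 * k)) + (k : ZMod (2 * k)) ∈ S)) →
        1 ≤ ∑ e ∈ E.filter (fun e => ¬(e.1 ∈ S ↔ e.2 ∈ S)), x e) ∧
      ∑ e ∈ E, x e ≤ (k : ℚ)) ∧
    (∀ F ⊆ E, (∀ i : Fin k,
        (SimpleGraph.fromEdgeSet ((fun e : ZMod (2 * k) × ZMod (2 * k) => s(e.1, e.2)) ''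
            (F : Set (ZMod (2 * k) × ZMod (2 * k))))).Reachable
          ((i : ℕ) : ZMod (2 * k)) (((i : ℕ) : ZMod (2 * k)) + (k : ZMod (2 * k)))) →
      2 * k - 1 ≤ F.card) := by
  have hEcard : E.card = 2 * k := by
    rw [hE, Finset.card_image_of_injective _ (fun a b h => (Prod.ext_iff.mp h).1),
      Finset.card_univ, ZMod.card]
  have hkk : (k : ZMod (2 * k)) + (k : ZMod (2 * k)) = 0 := by
    rw [← Nat.cast_add, show k + k = 2 * k by ring, ZMod.natCast_self]
  constructor
  · refine ⟨fun _ => 1 / 2, fun e => by norm_num, ?_, ?_⟩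
    · intro S ⟨i, hi⟩
      have hsep : ∃ a ∈ S, ∃ b, b ∉ S := by
        by_cases h1 : ((i : ℕ) : ZMod (2 * k)) ∈ S
        · refine ⟨_, h1, ((i : ℕ) : ZMod (2 * k)) + (k : ZMod (2 * k)), fun h2 => hi ⟨fun _ => h2, fun _ => h1⟩⟩
        · have h2 : ((i : ℕ) : ZMod (2 * k)) + (k : ZMod (2 * k)) ∈ S := by
            by_contra h2
            exact hi ⟨fun h => absurd h h1, fun h => absurd h h2⟩
          exact ⟨_, h2, _, h1⟩
      obtain ⟨a, ha, b, hb⟩ := hsep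
      obtain ⟨⟨u, huS, hu1⟩, ⟨w, hwS, hw1⟩⟩ := ucr_exists_flips S a b ha hb
      have hmemE : ∀ j : ZMod (2 * k), (j, j + 1) ∈ E := by
        intro j; rw [hE]; exact Finset.mem_image.mpr ⟨j, Finset.mem_univ _, rfl⟩
      have hmu : (u, u + 1) ∈ E.filter (fun e => ¬(e.1 ∈ S ↔ e.2 ∈ S)) := by
        refine Finset.mem_filter.mpr ⟨hmemE u, fun h => hu1 (h.mp huS)⟩
      have hmw : (w, w + 1) ∈ E.filter (fun e => ¬(e.1 ∈ S ↔ e.2 ∈ S)) := by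
        refine Finset.mem_filter.mpr ⟨hmemE w, fun h => hwS (h.mpr hw1)⟩
      have hne : ((u, u + 1) : ZMod (2 * k) × ZMod (2 * k)) ≠ (w, w + 1) := by
        intro h
        have h' : u = w := congrArg Prod.fst h
        exact hwS (h' ▸ huS)
      have h2c : 2 ≤ (E.filter (fun e => ¬(e.1 ∈ S ↔ e.2 ∈ S))).card :=
        Finset.one_lt_card.mpr ⟨_, hmu, _, hmw, hne⟩
      rw [Finset.sum_const, nsmul_eq_mul]
      have : (2 : ℚ) ≤ ((E.filter (fun e => ¬(e.1 ∈ S ↔ e.2 ∈ S))).card : ℚ) := by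
        exact_mod_cast h2c
      linarith
    · rw [Finset.sum_const, nsmul_eq_mul, hEcard]
      push_cast
      ring_nf
      norm_num
  · intro F hF hreach
    by_contra hcard
    push_neg at hcard
    have hsd : 2 ≤ (E \ F).card := by
      rw [Finset.card_sdiff_of_subset hF, hEcard]
      have := Finset.card_le_card hF
      omega
    obtain ⟨e1, he1, e2, he2, hne⟩ := Finset.one_lt_card.mp (show 1 < (E \ F).card by omega)
    obtain ⟨he1E, he1F⟩ := Finset.mem_sdiff.mp he1
    obtain ⟨he2E, he2F⟩ := Finset.mem_sdiff.mp he2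
    obtain ⟨u, -, hu⟩ := Finset.mem_image.mp (hE ▸ he1E)
    obtain ⟨w, -, hw⟩ := Finset.mem_image.mp (hE ▸ he2E)
    have huw : u ≠ w := by
      intro h
      exact hne (by rw [← hu, ← hw, h])
    obtain ⟨S, hnc, v, hv⟩ := ucr_sep k hk u w huw
    have Ginv : ∀ a b : ZMod (2 * k),
        (SimpleGraph.fromEdgeSet ((fun e : ZMod (2 * k) × ZMod (2 * k) => s(e.1, e.2)) ''
            (F : Set (ZMod (2 * k) × ZMod (2 * k))))).Adj a b → (a ∈ S ↔ b ∈ S) := by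
      intro a b hab
      rw [SimpleGraph.fromEdgeSet_adj] at hab
      obtain ⟨⟨e, heF, heq⟩, -⟩ := hab
      have heF' : e ∈ F := heF
      obtain ⟨j, -, hj⟩ := Finset.mem_image.mp (hE ▸ hF heF')
      have hju : j ≠ u := by
        intro h
        exact he1F (by rw [← hu, ← h, hj]; exact heF')
      have hjw : j ≠ w := by
        intro h
        exact he2F (by rw [← hw, ← h, hj]; exact heF')
      rw [← hj] at heq
      simp only [Sym2.eq_iff] at heq
      rcases heq with ⟨h1, h2⟩ | ⟨h1, h2⟩
      · rw [← h1, ← h2]; exact hnc j hju hjw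
      · rw [← h1, ← h2]; exact (hnc j hju hjw).symm
    obtain ⟨i, hi⟩ := ucr_exists_pair_index k hk v
    have hiv : ¬(((i : ℕ) : ZMod (2 * k)) ∈ S ↔ ((i : ℕ) : ZMod (2 * k)) + (k : ZMod (2 * k)) ∈ S) := by
      rcases hi with h | h
      · rw [h]; exact hv
      · rw [h, add_assoc, hkk, add_zero]
        exact fun hh => hv hh.symm
    exact hiv (ucr_reach_iff Ginv (hreach i))
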